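/- arXiv:2212.02759 — 6 statements merged into one kernel-verified Lean document; each statement's English description precedes it below -/
import Mathlib

section
/- For every x ∈ ℝⁿ, ⟨a(x − π_a(x)) − b(x − π_b(x)), π_a(x) − π_b(x)⟩ ≥ 0. -/
open RealInnerProductSpace

theorem inner_smul_sub_sub_nonpos_of_inner_nonpos {E : Type*} [NormedAddCommGroup E]
    [InnerProductSpace ℝ E] {x g p y : E} {c : ℝ} (hc : 0 < c)
    (h : ⟪x - c⁻¹ • g - p, y - p⟫ ≤ 0) : ⟪c • (x - p) - g, y - p⟫ ≤ 0 := by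
  have hscale : c • (x - c⁻¹ • g - p) = c • (x - p) - g := by
    rw [smul_sub, smul_sub, smul_sub, smul_inv_smul₀ hc.ne']
    abel
  rw [← hscale, real_inner_smul_left]
  exact mul_nonpos_of_nonneg_of_nonpos hc.le h

theorem dgap_stmt3_general {n : ℕ} (K : Set (EuclideanSpace ℝ (Fin n)))
    (F : EuclideanSpace ℝ (Fin n) → EuclideanSpace ℝ (Fin n))
    (a b : ℝ) (ha : 0 < a) (hab : a < b)
    (P : EuclideanSpace ℝ (Fin n) → EuclideanSpace ℝ (Fin n))
    (hP : ∀ z, P z ∈ K ∧ ∀ y ∈ K, ⟪z - P z, y - P z⟫ ≤ 0) :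
    ∀ x, 0 ≤ ⟪a • (x - P (x - a⁻¹ • F x)) - b • (x - P (x - b⁻¹ • F x)),
        P (x - a⁻¹ • F x) - P (x - b⁻¹ • F x)⟫ := by
  intro x
  set u := P (x - a⁻¹ • F x)
  set v := P (x - b⁻¹ • F x)
  have hu : ⟪a • (x - u) - F x, v - u⟫ ≤ 0 :=
    inner_smul_sub_sub_nonpos_of_inner_nonpos ha ((hP (x - a⁻¹ • F x)).2 v (hP _).1)
  have hv : ⟪b • (x - v) - F x, u - v⟫ ≤ 0 :=
    inner_smul_sub_sub_nonpos_of_inner_nonpos (ha.trans hab)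
      ((hP (x - b⁻¹ • F x)).2 u (hP _).1)
  calc 0 ≤ ⟪a • (x - u) - F x, u - v⟫ - ⟪b • (x - v) - F x, u - v⟫ := by
        rw [← neg_sub u v, inner_neg_right] at hu
        linarith
    _ = ⟪a • (x - u) - b • (x - v), u - v⟫ := by
        rw [← inner_sub_left, sub_sub_sub_cancel_right]

/-- `⟨a(x − π_a x) − b(x − π_b x), π_a x − π_b x⟩ ≥ 0`. -/
theorem dgap_stmt3 {n : ℕ} (K : Set (EuclideanSpace ℝ (Fin n)))
    (hK : K.Nonempty) (hKc : IsClosed K) (hKconv : Convex ℝ K)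
    (F : EuclideanSpace ℝ (Fin n) → EuclideanSpace ℝ (Fin n)) (hF : Continuous F)
    (a b : ℝ) (ha : 0 < a) (hab : a < b)
    (P : EuclideanSpace ℝ (Fin n) → EuclideanSpace ℝ (Fin n))
    (hP : ∀ z, P z ∈ K ∧ ∀ y ∈ K, ⟪z - P z, y - P z⟫ ≤ 0) :
    ∀ x, 0 ≤ ⟪a • (x - P (x - a⁻¹ • F x)) - b • (x - P (x - b⁻¹ • F x)),
        P (x - a⁻¹ • F x) - P (x - b⁻¹ • F x)⟫ :=
  dgap_stmt3_general K F a b ha hab P hP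
end

section
/- For every x ∈ ℝⁿ, ‖π_b(x) − π_a(x)‖ ≤ ((b − a)/a)·‖x − π_a(x)‖. -/
/-!
Write `p = π_b x`, `q = π_a x` and `g = F x`. Multiplying the variational inequality of `p`
(tested at `q`) by `b` and that of `q` (tested at `p`) by `a` and adding them cancels `g` and
leaves `b ‖p - q‖² ≤ (b - a) ⟪x - q, p - q⟫`. Cauchy–Schwarz then gives
`b ‖p - q‖ ≤ (b - a) ‖x - q‖`, which is even sharper than the claim since `a < b`.
-/

open RealInnerProductSpace

section VariationalInequality

variable {E : Type*} [NormedAddCommGroup E] [InnerProductSpace ℝ E]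

lemma inner_smul_sub_sub_nonpos {x g p y : E} {c : ℝ} (hc : 0 < c)
    (h : ⟪x - c⁻¹ • g - p, y - p⟫ ≤ 0) : ⟪c • (x - p) - g, y - p⟫ ≤ 0 := by
  have hscale : c • (x - c⁻¹ • g - p) = c • (x - p) - g := by
    rw [smul_sub, smul_sub, smul_inv_smul₀ hc.ne', smul_sub]
    abel
  rw [← hscale, real_inner_smul_left]
  exact mul_nonpos_of_nonneg_of_nonpos hc.le h

lemma mul_norm_sub_sq_le_inner {x g p q : E} {a b : ℝ} (ha : 0 < a) (hb : 0 < b)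
    (hp : ⟪x - b⁻¹ • g - p, q - p⟫ ≤ 0) (hq : ⟪x - a⁻¹ • g - q, p - q⟫ ≤ 0) :
    b * ‖p - q‖ ^ 2 ≤ (b - a) * ⟪x - q, p - q⟫ := by
  have hp' := inner_smul_sub_sub_nonpos hb hp
  have hq' := inner_smul_sub_sub_nonpos ha hq
  rw [show x - p = (x - q) - (p - q) by abel, ← neg_sub p q] at hp'
  generalize x - q = u at hp' hq' ⊢
  generalize p - q = w at hp' hq' ⊢
  simp only [inner_sub_left, inner_neg_right, real_inner_smul_left,
    real_inner_self_eq_norm_sq] at hp' hq'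
  linarith

lemma mul_norm_sub_le {x g p q : E} {a b : ℝ} (ha : 0 < a) (hab : a ≤ b)
    (hp : ⟪x - b⁻¹ • g - p, q - p⟫ ≤ 0) (hq : ⟪x - a⁻¹ • g - q, p - q⟫ ≤ 0) :
    b * ‖p - q‖ ≤ (b - a) * ‖x - q‖ := by
  have hba : 0 ≤ b - a := sub_nonneg.2 hab
  have hsq : b * ‖p - q‖ * ‖p - q‖ ≤ (b - a) * ‖x - q‖ * ‖p - q‖ :=
    calc b * ‖p - q‖ * ‖p - q‖ = b * ‖p - q‖ ^ 2 := by ring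
      _ ≤ (b - a) * ⟪x - q, p - q⟫ := mul_norm_sub_sq_le_inner ha (ha.trans_le hab) hp hq
      _ ≤ (b - a) * (‖x - q‖ * ‖p - q‖) :=
        mul_le_mul_of_nonneg_left (real_inner_le_norm _ _) hba
      _ = (b - a) * ‖x - q‖ * ‖p - q‖ := by ring
  rcases (norm_nonneg (p - q)).eq_or_lt with h0 | h0
  · rw [← h0, mul_zero]
    exact mul_nonneg hba (norm_nonneg _)
  · exact le_of_mul_le_mul_right hsq h0

end VariationalInequality

theorem dgap_stmt4_general {n : ℕ} (K : Set (EuclideanSpace ℝ (Fin n)))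
    (F : EuclideanSpace ℝ (Fin n) → EuclideanSpace ℝ (Fin n))
    (a b : ℝ) (ha : 0 < a) (hab : a < b)
    (P : EuclideanSpace ℝ (Fin n) → EuclideanSpace ℝ (Fin n))
    (hP : ∀ z, P z ∈ K ∧ ∀ y ∈ K, ⟪z - P z, y - P z⟫ ≤ 0) :
    ∀ x, ‖P (x - b⁻¹ • F x) - P (x - a⁻¹ • F x)‖ ≤
      (b - a) / a * ‖x - P (x - a⁻¹ • F x)‖ := by
  intro x
  set p := P (x - b⁻¹ • F x)
  set q := P (x - a⁻¹ • F x)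
  have hsharp := mul_norm_sub_le ha hab.le ((hP _).2 q (hP _).1) ((hP _).2 p (hP _).1)
  rw [div_mul_eq_mul_div, le_div_iff₀ ha]
  calc ‖p - q‖ * a ≤ b * ‖p - q‖ := by
        rw [mul_comm]; exact mul_le_mul_of_nonneg_right hab.le (norm_nonneg _)
    _ ≤ (b - a) * ‖x - q‖ := hsharp

/-- `‖π_b x − π_a x‖ ≤ ((b − a)/a)‖x − π_a x‖`. -/
theorem dgap_stmt4 {n : ℕ} (K : Set (EuclideanSpace ℝ (Fin n)))
    (hK : K.Nonempty) (hKc : IsClosed K) (hKconv : Convex ℝ K)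
    (F : EuclideanSpace ℝ (Fin n) → EuclideanSpace ℝ (Fin n)) (hF : Continuous F)
    (a b : ℝ) (ha : 0 < a) (hab : a < b)
    (P : EuclideanSpace ℝ (Fin n) → EuclideanSpace ℝ (Fin n))
    (hP : ∀ z, P z ∈ K ∧ ∀ y ∈ K, ⟪z - P z, y - P z⟫ ≤ 0) :
    ∀ x, ‖P (x - b⁻¹ • F x) - P (x - a⁻¹ • F x)‖ ≤
      (b - a) / a * ‖x - P (x - a⁻¹ • F x)‖ :=
  dgap_stmt4_general K F a b ha hab P hP
end

section
/- For every x ∈ ℝⁿ, ‖x − π_b(x)‖ ≤ ‖x − π_a(x)‖ ≤ (b/a)·‖x − π_b(x)‖. -/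
open RealInnerProductSpace

/- For a fixed direction `d`, write `p = x - P (x - s • d)` and `q = x - P (x - t • d)`.
Testing the variational inequality of each projection against the other projection and adding
the two inequalities with weights `t` and `s` cancels the `d`-terms and leaves
`t ‖p‖² + s ‖q‖² ≤ (t + s) ⟪p, q⟫ ≤ (t + s) ‖p‖ ‖q‖`, i.e. `(t ‖p‖ - s ‖q‖) (‖p‖ - ‖q‖) ≤ 0`.
For `0 < s ≤ t` this forces `‖p‖ ≤ ‖q‖` and `s ‖q‖ ≤ t ‖p‖`; take `s = b⁻¹`, `t = a⁻¹`. -/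

theorem le_and_mul_le_mul_of_mul_sq_add_mul_sq_le {s t p q : ℝ} (hs : 0 < s) (hst : s ≤ t)
    (hp : 0 ≤ p) (h : t * p ^ 2 + s * q ^ 2 ≤ (t + s) * (p * q)) :
    p ≤ q ∧ s * q ≤ t * p := by
  have hprod : (t * p - s * q) * (p - q) ≤ 0 := by nlinarith
  rcases lt_trichotomy p q with hlt | rfl | hgt
  · have := nonneg_of_mul_nonpos_left hprod (sub_neg.mpr hlt)
    exact ⟨hlt.le, by linarith⟩
  · exact ⟨le_rfl, mul_le_mul_of_nonneg_right hst hp⟩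
  · have := nonpos_of_mul_nonpos_left hprod (sub_pos.mpr hgt)
    linarith [mul_lt_mul_of_pos_left hgt hs, mul_le_mul_of_nonneg_right hst hp]

section InnerProductSpace

variable {E : Type*} [NormedAddCommGroup E] [InnerProductSpace ℝ E]

theorem weighted_norm_sq_le_inner {p q d : E} {s t : ℝ} (hs : 0 ≤ s) (ht : 0 ≤ t)
    (hp : ⟪p - s • d, p - q⟫ ≤ 0) (hq : ⟪q - t • d, q - p⟫ ≤ 0) :
    t * ‖p‖ ^ 2 + s * ‖q‖ ^ 2 ≤ (t + s) * ⟪p, q⟫ := by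
  simp only [inner_sub_left, inner_sub_right, real_inner_smul_left,
    real_inner_self_eq_norm_sq, real_inner_comm p q] at hp hq
  nlinarith [mul_nonpos_of_nonneg_of_nonpos ht hp, mul_nonpos_of_nonneg_of_nonpos hs hq]

theorem norm_sub_proj_step_le {K : Set E} {P : E → E}
    (hP : ∀ z, P z ∈ K ∧ ∀ y ∈ K, ⟪z - P z, y - P z⟫ ≤ 0) (x d : E) {s t : ℝ}
    (hs : 0 < s) (hst : s ≤ t) :
    ‖x - P (x - s • d)‖ ≤ ‖x - P (x - t • d)‖ ∧
      s * ‖x - P (x - t • d)‖ ≤ t * ‖x - P (x - s • d)‖ := by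
  set u := P (x - s • d)
  set v := P (x - t • d)
  have hu := (hP (x - s • d)).2 v (hP _).1
  have hv := (hP (x - t • d)).2 u (hP _).1
  rw [show x - s • d - u = (x - u) - s • d by abel, show v - u = (x - u) - (x - v) by abel] at hu
  rw [show x - t • d - v = (x - v) - t • d by abel, show u - v = (x - v) - (x - u) by abel] at hv
  have hweighted := weighted_norm_sq_le_inner hs.le (hs.le.trans hst) hu hv
  exact le_and_mul_le_mul_of_mul_sq_add_mul_sq_le hs hst (norm_nonneg _)
    (hweighted.trans (mul_le_mul_of_nonneg_left (real_inner_le_norm _ _) (by linarith)))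

end InnerProductSpace

theorem dgap_stmt5_general {n : ℕ} (K : Set (EuclideanSpace ℝ (Fin n)))
    (F : EuclideanSpace ℝ (Fin n) → EuclideanSpace ℝ (Fin n))
    (a b : ℝ) (ha : 0 < a) (hab : a < b)
    (P : EuclideanSpace ℝ (Fin n) → EuclideanSpace ℝ (Fin n))
    (hP : ∀ z, P z ∈ K ∧ ∀ y ∈ K, ⟪z - P z, y - P z⟫ ≤ 0) :
    ∀ x, ‖x - P (x - b⁻¹ • F x)‖ ≤ ‖x - P (x - a⁻¹ • F x)‖ ∧
      ‖x - P (x - a⁻¹ • F x)‖ ≤ b / a * ‖x - P (x - b⁻¹ • F x)‖ := by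
  intro x
  have hb : 0 < b := ha.trans hab
  obtain ⟨hmono, hscaled⟩ := norm_sub_proj_step_le hP x (F x) (inv_pos.mpr hb)
    ((inv_le_inv₀ hb ha).mpr hab.le)
  refine ⟨hmono, ?_⟩
  calc ‖x - P (x - a⁻¹ • F x)‖ = b * (b⁻¹ * ‖x - P (x - a⁻¹ • F x)‖) := by field_simp
    _ ≤ b * (a⁻¹ * ‖x - P (x - b⁻¹ • F x)‖) := by gcongr
    _ = b / a * ‖x - P (x - b⁻¹ • F x)‖ := by ring

/-- `‖x − π_b x‖ ≤ ‖x − π_a x‖ ≤ (b/a)‖x − π_b x‖`. -/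
theorem dgap_stmt5 {n : ℕ} (K : Set (EuclideanSpace ℝ (Fin n)))
    (hK : K.Nonempty) (hKc : IsClosed K) (hKconv : Convex ℝ K)
    (F : EuclideanSpace ℝ (Fin n) → EuclideanSpace ℝ (Fin n)) (hF : Continuous F)
    (a b : ℝ) (ha : 0 < a) (hab : a < b)
    (P : EuclideanSpace ℝ (Fin n) → EuclideanSpace ℝ (Fin n))
    (hP : ∀ z, P z ∈ K ∧ ∀ y ∈ K, ⟪z - P z, y - P z⟫ ≤ 0) :
    ∀ x, ‖x - P (x - b⁻¹ • F x)‖ ≤ ‖x - P (x - a⁻¹ • F x)‖ ∧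
      ‖x - P (x - a⁻¹ • F x)‖ ≤ b / a * ‖x - P (x - b⁻¹ • F x)‖ :=
  dgap_stmt5_general K F a b ha hab P hP
end

section
/- For every x ∈ ℝⁿ the D-gap function satisfies the two-sided estimate ((b − a)/2)‖x − π_b(x)‖² + (a/2)‖π_b(x) − π_a(x)‖² ≤ f_{ab}(x) ≤ ((b − a)/2)‖x − π_a(x)‖² − (b/2)‖π_b(x) − π_a(x)‖². -/
open RealInnerProductSpace

/-!
Write `φ_c(y) = ⟪F x, x - y⟫ - (c/2)‖y - x‖²`. Completing the square, the variational inequality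
of the projection `π_c(x)` upgrades its maximality to the quadratic-growth bound
`φ_c(y) + (c/2)‖y - π_c(x)‖² ≤ φ_c(π_c(x))` on `K`; in particular `f_c(x) = φ_c(π_c(x))`.
The bound for `a` at `y = π_b(x)` and the bound for `b` at `y = π_a(x)` give the two estimates,
since `φ_a - φ_b = ((b - a)/2)‖y - x‖²`.
-/

section RegularizedGap

variable {E : Type*} [NormedAddCommGroup E] [InnerProductSpace ℝ E]

noncomputable def regularizedGapObjective (v x : E) (c : ℝ) (y : E) : ℝ :=
  ⟪v, x - y⟫ - c / 2 * ‖y - x‖ ^ 2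

theorem regularizedGapObjective_add_sq_eq (v x y p : E) {c : ℝ} (hc : c ≠ 0) :
    regularizedGapObjective v x c y + c / 2 * ‖y - p‖ ^ 2 =
      regularizedGapObjective v x c p + c * ⟪x - c⁻¹ • v - p, y - p⟫ := by
  obtain ⟨w, rfl⟩ : ∃ w, v = c • w := ⟨c⁻¹ • v, by rw [smul_smul, mul_inv_cancel₀ hc, one_smul]⟩
  rw [smul_smul, inv_mul_cancel₀ hc, one_smul]
  simp only [regularizedGapObjective, ← real_inner_self_eq_norm_sq, real_inner_smul_left,
    inner_sub_left, inner_sub_right, real_inner_comm x y, real_inner_comm x p,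
    real_inner_comm y p]
  ring

theorem regularizedGapObjective_add_sq_le {v x y p : E} {c : ℝ} (hc : 0 < c)
    (hp : ⟪x - c⁻¹ • v - p, y - p⟫ ≤ 0) :
    regularizedGapObjective v x c y + c / 2 * ‖y - p‖ ^ 2 ≤ regularizedGapObjective v x c p := by
  rw [regularizedGapObjective_add_sq_eq v x y p hc.ne']
  linarith [mul_nonpos_of_nonneg_of_nonpos hc.le hp]

theorem isGreatest_regularizedGapObjective_image {K : Set E} {v x p : E} {c : ℝ} (hc : 0 < c)
    (hpK : p ∈ K) (hp : ∀ y ∈ K, ⟪x - c⁻¹ • v - p, y - p⟫ ≤ 0) :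
    IsGreatest (regularizedGapObjective v x c '' K) (regularizedGapObjective v x c p) := by
  refine ⟨Set.mem_image_of_mem _ hpK, ?_⟩
  rintro _ ⟨y, hyK, rfl⟩
  have := regularizedGapObjective_add_sq_le hc (hp y hyK)
  nlinarith [sq_nonneg ‖y - p‖]

end RegularizedGap

theorem dgap_stmt6_general {n : ℕ} (K : Set (EuclideanSpace ℝ (Fin n)))
    (F : EuclideanSpace ℝ (Fin n) → EuclideanSpace ℝ (Fin n))
    (a b : ℝ) (ha : 0 < a) (hab : a < b)
    (P : EuclideanSpace ℝ (Fin n) → EuclideanSpace ℝ (Fin n))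
    (hP : ∀ z, P z ∈ K ∧ ∀ y ∈ K, ⟪z - P z, y - P z⟫ ≤ 0)
    (fa fb : EuclideanSpace ℝ (Fin n) → ℝ)
    (hfa : ∀ x, IsGreatest
      ((fun y => ⟪F x, x - y⟫ - a / 2 * ‖y - x‖ ^ 2) '' K) (fa x))
    (hfb : ∀ x, IsGreatest
      ((fun y => ⟪F x, x - y⟫ - b / 2 * ‖y - x‖ ^ 2) '' K) (fb x)) :
    ∀ x, (b - a) / 2 * ‖x - P (x - b⁻¹ • F x)‖ ^ 2 +
        a / 2 * ‖P (x - b⁻¹ • F x) - P (x - a⁻¹ • F x)‖ ^ 2 ≤ fa x - fb x ∧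
      fa x - fb x ≤ (b - a) / 2 * ‖x - P (x - a⁻¹ • F x)‖ ^ 2 -
        b / 2 * ‖P (x - b⁻¹ • F x) - P (x - a⁻¹ • F x)‖ ^ 2 := by
  intro x
  have hb : 0 < b := ha.trans hab
  obtain ⟨hπaK, hπa⟩ := hP (x - a⁻¹ • F x)
  obtain ⟨hπbK, hπb⟩ := hP (x - b⁻¹ • F x)
  set πa := P (x - a⁻¹ • F x)
  set πb := P (x - b⁻¹ • F x)
  have hfa_eq : fa x = regularizedGapObjective (F x) x a πa :=
    (hfa x).unique (isGreatest_regularizedGapObjective_image ha hπaK hπa)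
  have hfb_eq : fb x = regularizedGapObjective (F x) x b πb :=
    (hfb x).unique (isGreatest_regularizedGapObjective_image hb hπbK hπb)
  have hlow := regularizedGapObjective_add_sq_le ha (hπa πb hπbK)
  have hup := regularizedGapObjective_add_sq_le hb (hπb πa hπaK)
  simp only [regularizedGapObjective, norm_sub_rev x, norm_sub_rev πa πb]
    at hfa_eq hfb_eq hlow hup ⊢
  constructor <;> linarith

/-- two-sided estimate for the D-gap function `f_ab = f_a - f_b`. -/
theorem dgap_stmt6 {n : ℕ} (K : Set (EuclideanSpace ℝ (Fin n)))
    (hK : K.Nonempty) (hKc : IsClosed K) (hKconv : Convex ℝ K)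
    (F : EuclideanSpace ℝ (Fin n) → EuclideanSpace ℝ (Fin n)) (hF : Continuous F)
    (a b : ℝ) (ha : 0 < a) (hab : a < b)
    (P : EuclideanSpace ℝ (Fin n) → EuclideanSpace ℝ (Fin n))
    (hP : ∀ z, P z ∈ K ∧ ∀ y ∈ K, ⟪z - P z, y - P z⟫ ≤ 0)
    (fa fb : EuclideanSpace ℝ (Fin n) → ℝ)
    (hfa : ∀ x, IsGreatest
      ((fun y => ⟪F x, x - y⟫ - a / 2 * ‖y - x‖ ^ 2) '' K) (fa x))
    (hfb : ∀ x, IsGreatest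
      ((fun y => ⟪F x, x - y⟫ - b / 2 * ‖y - x‖ ^ 2) '' K) (fb x)) :
    ∀ x, (b - a) / 2 * ‖x - P (x - b⁻¹ • F x)‖ ^ 2 +
        a / 2 * ‖P (x - b⁻¹ • F x) - P (x - a⁻¹ • F x)‖ ^ 2 ≤ fa x - fb x ∧
      fa x - fb x ≤ (b - a) / 2 * ‖x - P (x - a⁻¹ • F x)‖ ^ 2 -
        b / 2 * ‖P (x - b⁻¹ • F x) - P (x - a⁻¹ • F x)‖ ^ 2 :=
  dgap_stmt6_general K F a b ha hab P hP fa fb hfa hfb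
end

section
/- For every x ∈ ℝⁿ, f_{ab}(x) = ⟨F(x), π_b(x) − π_a(x)⟩ − (a/2)‖x − π_a(x)‖² + (b/2)‖x − π_b(x)‖². -/
/-!
Completing the square gives, for every `y`,
`φ(p) - φ(y) = c/2 ‖y - p‖² - c ⟪x - c⁻¹ • g - p, y - p⟫` where
`φ(y) = ⟪g, x - y⟫ - c/2 ‖y - x‖²`, so the variational characterisation of the projection
`p = P_K (x - c⁻¹ • g)` makes `p` the maximiser of `φ` on `K`. Evaluating `f_a` and `f_b` at
their maximisers and subtracting yields the formula.
-/

open RealInnerProductSpace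

section RegularizedGap

variable {E : Type*} [NormedAddCommGroup E] [InnerProductSpace ℝ E]

lemma regGap_sub_regGap_eq (g x p y : E) {c : ℝ} (hc : c ≠ 0) :
    (⟪g, x - p⟫ - c / 2 * ‖p - x‖ ^ 2) - (⟪g, x - y⟫ - c / 2 * ‖y - x‖ ^ 2) =
      c / 2 * ‖y - p‖ ^ 2 - c * ⟪x - c⁻¹ • g - p, y - p⟫ := by
  have hyx : y - x = (y - p) + (p - x) := by abel
  rw [hyx, norm_add_sq_real]
  simp only [inner_sub_left, inner_sub_right, real_inner_smul_left]
  rw [real_inner_comm y p, real_inner_comm y x, real_inner_comm p x]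
  field_simp
  ring

lemma isGreatest_regGap_of_proj {K : Set E} {g x p : E} {c : ℝ} (hc : 0 < c) (hpK : p ∈ K)
    (hp : ∀ y ∈ K, ⟪x - c⁻¹ • g - p, y - p⟫ ≤ 0) :
    IsGreatest ((fun y => ⟪g, x - y⟫ - c / 2 * ‖y - x‖ ^ 2) '' K)
      (⟪g, x - p⟫ - c / 2 * ‖p - x‖ ^ 2) := by
  refine ⟨⟨p, hpK, rfl⟩, ?_⟩
  rintro _ ⟨y, hy, rfl⟩
  have hgap := regGap_sub_regGap_eq g x p y hc.ne'
  have hvi : c * ⟪x - c⁻¹ • g - p, y - p⟫ ≤ 0 :=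
    mul_nonpos_of_nonneg_of_nonpos hc.le (hp y hy)
  have hsq : 0 ≤ c / 2 * ‖y - p‖ ^ 2 := by positivity
  dsimp only
  linarith

end RegularizedGap

theorem dgap_stmt7_general {n : ℕ} (K : Set (EuclideanSpace ℝ (Fin n)))
    (F : EuclideanSpace ℝ (Fin n) → EuclideanSpace ℝ (Fin n))
    (a b : ℝ) (ha : 0 < a) (hab : a < b)
    (P : EuclideanSpace ℝ (Fin n) → EuclideanSpace ℝ (Fin n))
    (hP : ∀ z, P z ∈ K ∧ ∀ y ∈ K, ⟪z - P z, y - P z⟫ ≤ 0)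
    (fa fb : EuclideanSpace ℝ (Fin n) → ℝ)
    (hfa : ∀ x, IsGreatest
      ((fun y => ⟪F x, x - y⟫ - a / 2 * ‖y - x‖ ^ 2) '' K) (fa x))
    (hfb : ∀ x, IsGreatest
      ((fun y => ⟪F x, x - y⟫ - b / 2 * ‖y - x‖ ^ 2) '' K) (fb x)) :
    ∀ x, fa x - fb x = ⟪F x, P (x - b⁻¹ • F x) - P (x - a⁻¹ • F x)⟫ -
        a / 2 * ‖x - P (x - a⁻¹ • F x)‖ ^ 2 + b / 2 * ‖x - P (x - b⁻¹ • F x)‖ ^ 2 := by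
  intro x
  have hfa_eq := (hfa x).unique
    (isGreatest_regGap_of_proj ha (hP _).1 (hP (x - a⁻¹ • F x)).2)
  have hfb_eq := (hfb x).unique
    (isGreatest_regGap_of_proj (ha.trans hab) (hP _).1 (hP (x - b⁻¹ • F x)).2)
  rw [hfa_eq, hfb_eq, norm_sub_rev (P _), norm_sub_rev (P _)]
  simp only [inner_sub_right]
  ring

/-- explicit formula for the D-gap function `f_ab = f_a - f_b`. -/
theorem dgap_stmt7 {n : ℕ} (K : Set (EuclideanSpace ℝ (Fin n)))
    (hK : K.Nonempty) (hKc : IsClosed K) (hKconv : Convex ℝ K)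
    (F : EuclideanSpace ℝ (Fin n) → EuclideanSpace ℝ (Fin n)) (hF : Continuous F)
    (a b : ℝ) (ha : 0 < a) (hab : a < b)
    (P : EuclideanSpace ℝ (Fin n) → EuclideanSpace ℝ (Fin n))
    (hP : ∀ z, P z ∈ K ∧ ∀ y ∈ K, ⟪z - P z, y - P z⟫ ≤ 0)
    (fa fb : EuclideanSpace ℝ (Fin n) → ℝ)
    (hfa : ∀ x, IsGreatest
      ((fun y => ⟪F x, x - y⟫ - a / 2 * ‖y - x‖ ^ 2) '' K) (fa x))
    (hfb : ∀ x, IsGreatest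
      ((fun y => ⟪F x, x - y⟫ - b / 2 * ‖y - x‖ ^ 2) '' K) (fb x)) :
    ∀ x, fa x - fb x = ⟪F x, P (x - b⁻¹ • F x) - P (x - a⁻¹ • F x)⟫ -
        a / 2 * ‖x - P (x - a⁻¹ • F x)‖ ^ 2 + b / 2 * ‖x - P (x - b⁻¹ • F x)‖ ^ 2 :=
  dgap_stmt7_general K F a b ha hab P hP fa fb hfa hfb
end

section
/- The D-gap function f_{ab} is nonnegative on ℝⁿ, and f_{ab}(x) = 0 if and only if x solves the variational inequality problem, i.e., x ∈ K and ⟨F(x), y − x⟩ ≥ 0 for all y ∈ K. -/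
/-!
Write `φ_c(y) = ⟪F x, x - y⟫ - c/2 ‖y - x‖²`, so `f_c(x) = max_K φ_c`. Since `φ_a ≥ φ_b` pointwise,
evaluating `φ_a` at a maximizer `y_b` of `φ_b` gives `f_a(x) ≥ f_b(x) + (b - a)/2 ‖y_b - x‖²`.
Hence `f_a(x) = f_b(x)` forces `y_b = x`, so `x ∈ K` and `f_a(x) = f_b(x) = φ_b(x) = 0`; testing
`φ_a ≤ 0` on the segment `x + t (y - x)` and letting `t → 0⁺` yields the variational inequality.
Conversely, at a solution every `φ_c` with `c ≥ 0` is `≤ 0` on `K` and vanishes at `y = x`.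
-/

open RealInnerProductSpace Filter Topology Set

section RegularizedGap

variable {E : Type*} [NormedAddCommGroup E] [InnerProductSpace ℝ E] {K : Set E} {v x : E}

noncomputable def regGapObjective (v x : E) (c : ℝ) (y : E) : ℝ :=
  ⟪v, x - y⟫ - c / 2 * ‖y - x‖ ^ 2

@[simp]
lemma regGapObjective_self (v x : E) (c : ℝ) : regGapObjective v x c x = 0 := by
  simp [regGapObjective]

lemma regGapObjective_add_smul_sub (v x y : E) (c t : ℝ) :
    regGapObjective v x c (x + t • (y - x)) = t * ⟪v, x - y⟫ - t ^ 2 * (c / 2 * ‖y - x‖ ^ 2) := by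
  have hx : x - (x + t • (y - x)) = t • (x - y) := by module
  rw [regGapObjective, hx, add_sub_cancel_left, real_inner_smul_right, norm_smul,
    Real.norm_eq_abs, mul_pow, sq_abs]
  ring

lemma regGapObjective_sub (v x y : E) (a b : ℝ) :
    regGapObjective v x a y = regGapObjective v x b y + (b - a) / 2 * ‖y - x‖ ^ 2 := by
  simp only [regGapObjective]
  ring

lemma regGap_le_of_le {a b fa fb : ℝ} (hab : a ≤ b)
    (hfa : IsGreatest (regGapObjective v x a '' K) fa)
    (hfb : IsGreatest (regGapObjective v x b '' K) fb) : fb ≤ fa := by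
  obtain ⟨y, hyK, rfl⟩ := hfb.1
  calc regGapObjective v x b y
      ≤ regGapObjective v x a y := by
        rw [regGapObjective_sub v x y a b]
        have : 0 ≤ (b - a) / 2 * ‖y - x‖ ^ 2 := by have := sub_nonneg.2 hab; positivity
        linarith
    _ ≤ fa := hfa.2 (mem_image_of_mem _ hyK)

lemma mem_and_regGap_eq_zero_of_regGap_eq {a b fa fb : ℝ} (hab : a < b)
    (hfa : IsGreatest (regGapObjective v x a '' K) fa)
    (hfb : IsGreatest (regGapObjective v x b '' K) fb) (heq : fa = fb) :
    x ∈ K ∧ fb = 0 := by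
  obtain ⟨y, hyK, rfl⟩ := hfb.1
  have hle : regGapObjective v x a y ≤ regGapObjective v x b y :=
    heq ▸ hfa.2 (mem_image_of_mem _ hyK)
  have hyx : ‖y - x‖ ^ 2 = 0 := by
    rw [regGapObjective_sub v x y a b] at hle
    have hba : 0 < (b - a) / 2 := by linarith
    nlinarith [sq_nonneg ‖y - x‖]
  obtain rfl : y = x := by simpa [sub_eq_zero] using hyx
  exact ⟨hyK, regGapObjective_self v y b⟩

lemma nonpos_of_forall_le_mul {s C : ℝ} (h : ∀ t ∈ Ioc (0 : ℝ) 1, s ≤ t * C) : s ≤ 0 := by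
  have hlim : Tendsto (fun t : ℝ => t * C) (𝓝[>] 0) (𝓝 0) :=
    ((continuous_mul_const C).tendsto' 0 0 (zero_mul C)).mono_left nhdsWithin_le_nhds
  refine ge_of_tendsto hlim ?_
  filter_upwards [Ioc_mem_nhdsGT zero_lt_one] with t ht using h t ht

/-- The first-order optimality condition at `y = x`: the quadratic term vanishes to second order. -/
lemma inner_sub_nonneg_of_regGapObjective_nonpos {c : ℝ} (hK : Convex ℝ K) (hx : x ∈ K)
    (hmax : ∀ y ∈ K, regGapObjective v x c y ≤ 0) : ∀ y ∈ K, 0 ≤ ⟪v, y - x⟫ := by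
  intro y hy
  have hs : ⟪v, x - y⟫ ≤ 0 := by
    refine nonpos_of_forall_le_mul (C := c / 2 * ‖y - x‖ ^ 2) fun t ⟨ht0, ht1⟩ => ?_
    have hseg := hmax _ (hK.add_smul_sub_mem hx hy ⟨ht0.le, ht1⟩)
    rw [regGapObjective_add_smul_sub] at hseg
    nlinarith
  rwa [← neg_sub, inner_neg_right, neg_nonpos] at hs

lemma regGap_eq_zero_of_solves {c f : ℝ} (hc : 0 ≤ c) (hx : x ∈ K)
    (hsol : ∀ y ∈ K, 0 ≤ ⟪v, y - x⟫) (hf : IsGreatest (regGapObjective v x c '' K) f) : f = 0 := by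
  refine le_antisymm ?_ (regGapObjective_self v x c ▸ hf.2 (mem_image_of_mem _ hx))
  obtain ⟨y, hyK, rfl⟩ := hf.1
  have hinner : ⟪v, x - y⟫ ≤ 0 := by
    rw [← neg_sub, inner_neg_right, neg_nonpos]
    exact hsol y hyK
  have : 0 ≤ c / 2 * ‖y - x‖ ^ 2 := by positivity
  simp only [regGapObjective]
  linarith

end RegularizedGap

theorem dgap_stmt8_general {n : ℕ} (K : Set (EuclideanSpace ℝ (Fin n)))
    (hKconv : Convex ℝ K)
    (F : EuclideanSpace ℝ (Fin n) → EuclideanSpace ℝ (Fin n))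
    (a b : ℝ) (ha : 0 < a) (hab : a < b)
    (fa fb : EuclideanSpace ℝ (Fin n) → ℝ)
    (hfa : ∀ x, IsGreatest
      ((fun y => ⟪F x, x - y⟫ - a / 2 * ‖y - x‖ ^ 2) '' K) (fa x))
    (hfb : ∀ x, IsGreatest
      ((fun y => ⟪F x, x - y⟫ - b / 2 * ‖y - x‖ ^ 2) '' K) (fb x)) :
    ∀ x, 0 ≤ fa x - fb x ∧
      (fa x - fb x = 0 ↔ x ∈ K ∧ ∀ y ∈ K, 0 ≤ ⟪F x, y - x⟫) := by
  intro x
  have hA : IsGreatest (regGapObjective (F x) x a '' K) (fa x) := hfa x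
  have hB : IsGreatest (regGapObjective (F x) x b '' K) (fb x) := hfb x
  refine ⟨sub_nonneg.2 (regGap_le_of_le hab.le hA hB), ⟨fun h => ?_, fun ⟨hx, hsol⟩ => ?_⟩⟩
  · obtain ⟨hx, hfb0⟩ := mem_and_regGap_eq_zero_of_regGap_eq hab hA hB (sub_eq_zero.1 h)
    have hfa0 : fa x = 0 := by linarith
    refine ⟨hx, inner_sub_nonneg_of_regGapObjective_nonpos (c := a) hKconv hx fun y hy => ?_⟩
    exact hfa0 ▸ hA.2 (mem_image_of_mem _ hy)
  · rw [regGap_eq_zero_of_solves ha.le hx hsol hA,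
      regGap_eq_zero_of_solves (ha.trans hab).le hx hsol hB, sub_zero]

/-- `f_ab ≥ 0` and `f_ab x = 0` iff `x` solves (VIP). -/
theorem dgap_stmt8 {n : ℕ} (K : Set (EuclideanSpace ℝ (Fin n)))
    (hK : K.Nonempty) (hKc : IsClosed K) (hKconv : Convex ℝ K)
    (F : EuclideanSpace ℝ (Fin n) → EuclideanSpace ℝ (Fin n)) (hF : Continuous F)
    (a b : ℝ) (ha : 0 < a) (hab : a < b)
    (fa fb : EuclideanSpace ℝ (Fin n) → ℝ)
    (hfa : ∀ x, IsGreatest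
      ((fun y => ⟪F x, x - y⟫ - a / 2 * ‖y - x‖ ^ 2) '' K) (fa x))
    (hfb : ∀ x, IsGreatest
      ((fun y => ⟪F x, x - y⟫ - b / 2 * ‖y - x‖ ^ 2) '' K) (fb x)) :
    ∀ x, 0 ≤ fa x - fb x ∧
      (fa x - fb x = 0 ↔ x ∈ K ∧ ∀ y ∈ K, 0 ≤ ⟪F x, y - x⟫) :=
  dgap_stmt8_general K hKconv F a b ha hab fa fb hfa hfb
end
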